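/- Let a ∈ ℝ with |a| ≤ 1/2 and b > 0 with b² + (|a| − 1/2)² ≥ 1/4. Then for every ξ = (ξ₁, ξ₂) ∈ ℝ² with ξ₁ ∈ ℤ and aξ₁ + bξ₂ + 1/2 ∈ ℤ, one has ξ₁² + ξ₂² ≥ 1/(4b²); moreover ξ = (0, 1/(2b)) satisfies these conditions with ξ₁² + ξ₂² = 1/(4b²). (The shortest vector of the affine dual lattice Γ*_χ for the non-trivial spin structure has length 1/(2b); this is the lattice computation underlying λ₁(𝕋², g_{a,b}, S₁) = π/b.) -/
import Mathlib

private lemma key_pos (a b : ℝ) (ha0 : 0 ≤ a) (ha : a ≤ 1 / 2)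
    (hb2 : a - a ^ 2 ≤ b ^ 2) (m n : ℤ) (hm : 1 ≤ m) :
    1 / 4 ≤ b ^ 2 * (m : ℝ) ^ 2 + ((n : ℝ) - a * m - 1 / 2) ^ 2 := by
  have hm1 : (1 : ℝ) ≤ (m : ℝ) := by exact_mod_cast hm
  rcases le_or_gt (a * m) (1 / 2) with hA | hA
  · rcases le_or_gt n 0 with hn | hn
    · have hn' : (n : ℝ) ≤ 0 := by exact_mod_cast hn
      have ham : 0 ≤ a * m := mul_nonneg ha0 (by linarith)
      nlinarith [sq_nonneg (b * m), sq_nonneg ((n:ℝ) - a * m - 1/2)]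
    · have hn' : (1 : ℝ) ≤ (n : ℝ) := by exact_mod_cast hn
      have ht : 1 / 2 - a * m ≤ (n : ℝ) - a * m - 1 / 2 := by linarith
      have ht0 : 0 ≤ 1 / 2 - a * m := by linarith
      have h1 : (1 / 2 - a * m) ^ 2 ≤ ((n : ℝ) - a * m - 1 / 2) ^ 2 := by
        nlinarith
      have h2 : (a - a ^ 2) * (m : ℝ) ^ 2 ≤ b ^ 2 * (m : ℝ) ^ 2 := by
        nlinarith [sq_nonneg (m : ℝ)]
      nlinarith [mul_nonneg (mul_nonneg ha0 (by linarith : (0:ℝ) ≤ (m:ℝ))) (by linarith : (0:ℝ) ≤ (m:ℝ) - 1)]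
  · have hm2 : (2 : ℝ) ≤ (m : ℝ) := by
      have : 1 < (m : ℝ) := by nlinarith
      have : 1 < m := by exact_mod_cast this
      exact_mod_cast this
    have h2 : (a - a ^ 2) * (m : ℝ) ^ 2 ≤ b ^ 2 * (m : ℝ) ^ 2 := by
      nlinarith [sq_nonneg (m : ℝ)]
    nlinarith [sq_nonneg ((n:ℝ) - a * m - 1/2), mul_pos (by linarith : (0:ℝ) < a * m) (by linarith : (0:ℝ) < (m:ℝ) - 1)]

private lemma key (a b : ℝ) (ha0 : 0 ≤ a) (ha : a ≤ 1 / 2)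
    (hb2 : a - a ^ 2 ≤ b ^ 2) (m n : ℤ) :
    1 / 4 ≤ b ^ 2 * (m : ℝ) ^ 2 + ((n : ℝ) - a * m - 1 / 2) ^ 2 := by
  rcases lt_trichotomy m 0 with hm | hm | hm
  · have := key_pos a b ha0 ha hb2 (-m) (1 - n) (by omega)
    push_cast at this ⊢
    nlinarith [this]
  · subst hm
    have hn : (2 * n - 1 : ℤ) ≠ 0 := by omega
    have h1 : (1 : ℤ) ≤ (2 * n - 1) ^ 2 := by rcases le_or_gt n 0 with h | h <;> nlinarith
    have h1' : (1 : ℝ) ≤ ((2 * (n:ℝ) - 1)) ^ 2 := by exact_mod_cast h1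
    push_cast
    nlinarith [sq_nonneg b]
  · exact key_pos a b ha0 ha hb2 m n hm

private lemma key' (a b : ℝ) (ha : |a| ≤ 1 / 2) (hb : 0 < b)
    (hab : 1 / 4 ≤ b ^ 2 + (|a| - 1 / 2) ^ 2) (m n : ℤ) :
    1 / 4 ≤ b ^ 2 * (m : ℝ) ^ 2 + ((n : ℝ) - a * m - 1 / 2) ^ 2 := by
  have hb2 : |a| - |a| ^ 2 ≤ b ^ 2 := by nlinarith
  rcases abs_cases a with ⟨h1, h2⟩ | ⟨h1, h2⟩
  · have := key a b (by linarith [abs_nonneg a, h1]) (h1 ▸ ha) (by rw [← h1]; nlinarith) m n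
    exact this
  · have := key (-a) b (by linarith) (by linarith [h1 ▸ ha]) (by nlinarith) (-m) n
    push_cast at this ⊢
    nlinarith [this]

theorem affine_dual_lattice_shortest_vector_nontrivial_spin
    (a b : ℝ) (ha : |a| ≤ 1 / 2) (hb : 0 < b)
    (hab : 1 / 4 ≤ b ^ 2 + (|a| - 1 / 2) ^ 2) :
    (∀ ξ₁ ξ₂ : ℝ, (∃ k : ℤ, ξ₁ = k) → (∃ k : ℤ, a * ξ₁ + b * ξ₂ + 1 / 2 = k) →
      ξ₁ ^ 2 + ξ₂ ^ 2 ≥ 1 / (4 * b ^ 2)) ∧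
    ((∃ k : ℤ, (0 : ℝ) = k) ∧ (∃ k : ℤ, a * 0 + b * (1 / (2 * b)) + 1 / 2 = k) ∧
      (0 : ℝ) ^ 2 + (1 / (2 * b)) ^ 2 = 1 / (4 * b ^ 2)) := by
  have hb2 : (0 : ℝ) < b ^ 2 := by positivity
  refine ⟨?_, ⟨0, by norm_num⟩, ⟨1, by field_simp; ring⟩, by field_simp; ring⟩
  rintro ξ₁ ξ₂ ⟨m, rfl⟩ ⟨n, hn⟩
  have hξ₂ : b * ξ₂ = (n : ℝ) - a * m - 1 / 2 := by linarith
  have hkey := key' a b ha hb hab m n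
  rw [← hξ₂] at hkey
  rw [ge_iff_le, div_le_iff₀ (by positivity)]
  nlinarith [hkey]
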